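/- For every positive summable sequence (k_r)_{r≥1} there exists an infinite weighted graph (in fact a birth-death chain) with bounded weighted vertex degree whose sphere curvatures satisfy κ(r) ≥ k_r for all r ≥ 1 and Σ_r κ(r) < ∞. Concretely, the birth-death chain with m(0)=1, w(0,1)=2Σ_{i>0}k_i, and inductively m(r) = w(r,r-1)/k_{r+1}, w(r,r+1) = 2m(r)Σ_{i>r}k_i has curvatures κ(r-1,r) = k_r + k_{r+1} for r > 1, κ(0,1) = 2k_1 + k_2, and Deg(r) ≤ 3Σ_i k_i for all r. -/

import Mathlib

open scoped BigOperators

/-- A locally finite weighted graph. -/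
structure WeightedGraph (V : Type) where
  w : V → V → ℝ
  m : V → ℝ
  symm : ∀ x y, w x y = w y x
  loopless : ∀ x, w x x = 0
  nonneg : ∀ x y, 0 ≤ w x y
  mpos : ∀ x, 0 < m x
  locFin : ∀ x, Set.Finite {y | w x y ≠ 0}

namespace WeightedGraph

variable {V : Type} (G : WeightedGraph V)

/-- The underlying simple graph. -/
def toSimple : SimpleGraph V where
  Adj x y := x ≠ y ∧ G.w x y ≠ 0
  symm := by
    constructor
    intro x y h
    exact ⟨h.1.symm, by rw [G.symm y x]; exact h.2⟩
  loopless := by constructor; intro x h; exact h.1 rfl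

/-- The combinatorial graph distance. -/
noncomputable def dist (x y : V) : ℕ := G.toSimple.dist x y

/-- The graph Laplacian. -/
noncomputable def lap (f : V → ℝ) (x : V) : ℝ :=
  (∑ᶠ y, G.w x y * (f y - f x)) / G.m x

/-- The weighted vertex degree. -/
noncomputable def deg (x : V) : ℝ := (∑ᶠ y, G.w x y) / G.m x

/-- `f` is `1`-Lipschitz with respect to the combinatorial distance. -/
def Lip1 (f : V → ℝ) : Prop := ∀ x y, |f x - f y| ≤ (G.dist x y : ℝ)

/-- The Ollivier curvature, via the limit-free formula
`κ(x,y) = inf {∇_{xy} Δ f : f ∈ Lip(1) ∩ C_c(V), ∇_{yx} f = 1}`. -/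
noncomputable def curv (x y : V) : ℝ :=
  sInf { c | ∃ f : V → ℝ, G.Lip1 f ∧ (Function.support f).Finite ∧
    f y - f x = (G.dist x y : ℝ) ∧ c = (G.lap f x - G.lap f y) / (G.dist x y : ℝ) }

end WeightedGraph

/-!
On a birth-death chain, a `1`-Lipschitz test function `f` with `f (r + 1) - f r = 1` enters
`Δ f r - Δ f (r + 1)` only through its other increments at `r` and `r + 1`, which lie in `[-1, 1]`;
the identity is extremal for both, and a tent function agreeing with the identity near `r` shows
that the infimum is attained. Hence `κ(r, r + 1) = Δ id (r) - Δ id (r + 1)`.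
For the chain built from `k`, the choice `w(r, r + 1) = 2 m(r) ∑_{i > r} k i` gives
`Δ id (0) = 2 ∑_{i > 0} k i` and `Δ id (r) = 2 ∑_{i > r} k i - k (r + 1)` for `r ≥ 1`, so the
curvatures telescope to `k (r + 1) + k (r + 2)` (plus `k 1` at `r = 0`) and the degrees stay
below `3 ∑ k`.
-/

def tent (c n : ℕ) : ℝ := max (min (n : ℝ) (2 * c - n)) 0

lemma tent_of_le {c n : ℕ} (h : n ≤ c) : tent c n = n := by
  have h' : (n : ℝ) ≤ c := by exact_mod_cast h
  rw [tent, min_eq_left (by linarith), max_eq_left n.cast_nonneg]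

lemma abs_tent_sub_tent_le (c a b : ℕ) : |tent c a - tent c b| ≤ |(a : ℝ) - b| := by
  refine (abs_max_sub_max_le_abs _ _ _).trans <| (abs_min_sub_min_le_max _ _ _ _).trans ?_
  rw [show (2 * c - a : ℝ) - (2 * c - b) = -(a - b) by ring, abs_neg, max_self]

lemma finite_support_tent (c : ℕ) : (Function.support (tent c)).Finite := by
  refine (Set.finite_Iic (2 * c)).subset fun n hn => ?_
  by_contra hlt
  have hlt' : (2 * c : ℝ) < n := by exact_mod_cast not_le.mp hlt
  exact hn (max_eq_right ((min_le_right _ _).trans (by linarith)))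

namespace WeightedGraph

variable {V : Type} (G : WeightedGraph V)

lemma adj_of_w_ne_zero {x y : V} (h : G.w x y ≠ 0) : G.toSimple.Adj x y :=
  ⟨fun hxy => h (hxy ▸ G.loopless x), h⟩

lemma dist_eq_one_of_w_ne_zero {x y : V} (h : G.w x y ≠ 0) : G.dist x y = 1 :=
  SimpleGraph.dist_eq_one_iff_adj.mpr (G.adj_of_w_ne_zero h)

variable {G}

lemma Lip1.abs_sub_le_one {f : V → ℝ} (hf : G.Lip1 f) {x y : V} (h : G.w x y ≠ 0) :
    |f x - f y| ≤ 1 := by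
  simpa [G.dist_eq_one_of_w_ne_zero h] using hf x y

lemma lap_le_lap {f g : V → ℝ} {x : V} (h : ∀ y, G.w x y ≠ 0 → f y - f x ≤ g y - g x) :
    G.lap f x ≤ G.lap g x := by
  have hsupp (h : V → ℝ) : (Function.support fun y => G.w x y * h y).Finite :=
    (G.locFin x).subset fun y hy => left_ne_zero_of_mul hy
  refine div_le_div_of_nonneg_right ?_ (G.mpos x).le
  refine finsum_le_finsum' (hsupp _) (hsupp _) fun y => ?_
  by_cases hy : G.w x y = 0
  · simp [hy]
  · exact mul_le_mul_of_nonneg_left (h y hy) (G.nonneg x y)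

lemma lap_congr {f g : V → ℝ} {x : V} (h : ∀ y, G.w x y ≠ 0 → f y - f x = g y - g x) :
    G.lap f x = G.lap g x :=
  le_antisymm (lap_le_lap fun y hy => (h y hy).le) (lap_le_lap fun y hy => (h y hy).ge)

def IsBirthDeath (G : WeightedGraph ℕ) : Prop :=
  ∀ r s : ℕ, s ≠ r + 1 → r ≠ s + 1 → G.w r s = 0

lemma reachable_of_w_succ_pos {G : WeightedGraph ℕ} (hpos : ∀ r, 0 < G.w r (r + 1)) (a b : ℕ) :
    G.toSimple.Reachable a b := by
  have from_zero (n : ℕ) : G.toSimple.Reachable 0 n := by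
    induction n with
    | zero => rfl
    | succ n ih => exact ih.trans (G.adj_of_w_ne_zero (hpos n).ne').reachable
  exact (from_zero a).symm.trans (from_zero b)

namespace IsBirthDeath

variable {G : WeightedGraph ℕ}

lemma eq_succ_or_eq_succ (hG : G.IsBirthDeath) {r s : ℕ} (h : G.w r s ≠ 0) :
    s = r + 1 ∨ r = s + 1 := by
  by_contra! hc
  exact h (hG r s hc.1 hc.2)

lemma abs_sub_le_length (hG : G.IsBirthDeath) {a b : ℕ} (p : G.toSimple.Walk a b) :
    |(a : ℝ) - b| ≤ p.length := by
  induction p with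
  | nil => simp
  | @cons u c d h q ih =>
    have hstep : |(u : ℝ) - c| = 1 := by
      rcases hG.eq_succ_or_eq_succ h.2 with rfl | rfl <;> norm_num
    rw [SimpleGraph.Walk.length_cons, Nat.cast_succ]
    linarith [abs_sub_le (u : ℝ) c d]

lemma abs_sub_le_dist (hG : G.IsBirthDeath) (hpos : ∀ r, 0 < G.w r (r + 1)) (a b : ℕ) :
    |(a : ℝ) - b| ≤ G.dist a b := by
  obtain ⟨p, hp⟩ := (reachable_of_w_succ_pos hpos a b).exists_walk_length_eq_dist
  rw [dist, ← hp]
  exact hG.abs_sub_le_length p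

lemma finsum_w_mul (hG : G.IsBirthDeath) (g : ℕ → ℝ) (x : ℕ) :
    ∑ᶠ y, G.w x y * g y = G.w x (x - 1) * g (x - 1) + G.w x (x + 1) * g (x + 1) := by
  rw [finsum_eq_finsetSum_of_support_subset _ (s := {x - 1, x + 1}),
    Finset.sum_pair (by omega)]
  intro y hy
  rcases hG.eq_succ_or_eq_succ (left_ne_zero_of_mul hy) with rfl | rfl <;> simp

lemma lap_natCast_zero (hG : G.IsBirthDeath) : G.lap (↑) 0 = G.w 0 1 / G.m 0 := by
  simp [lap, hG.finsum_w_mul]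

lemma lap_natCast_succ (hG : G.IsBirthDeath) (r : ℕ) :
    G.lap (↑) (r + 1) = (G.w (r + 1) (r + 2) - G.w (r + 1) r) / G.m (r + 1) := by
  simp only [lap, hG.finsum_w_mul, Nat.add_sub_cancel]
  push_cast
  ring

lemma deg_zero (hG : G.IsBirthDeath) : G.deg 0 = G.w 0 1 / G.m 0 := by
  simpa [deg, G.loopless] using congrArg (· / G.m 0) (hG.finsum_w_mul 1 0)

lemma deg_succ (hG : G.IsBirthDeath) (r : ℕ) :
    G.deg (r + 1) = (G.w (r + 1) r + G.w (r + 1) (r + 2)) / G.m (r + 1) := by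
  simpa [deg] using congrArg (· / G.m (r + 1)) (hG.finsum_w_mul 1 (r + 1))

lemma le_succ_of_w_ne_zero (hG : G.IsBirthDeath) {r s : ℕ} (h : G.w r s ≠ 0) : s ≤ r + 1 := by
  rcases hG.eq_succ_or_eq_succ h with rfl | rfl <;> omega

lemma lap_natCast_le_lap (hG : G.IsBirthDeath) {f : ℕ → ℝ} (hf : G.Lip1 f) {r : ℕ}
    (h : f (r + 1) - f r = 1) : G.lap (↑) r ≤ G.lap f r := by
  refine lap_le_lap fun y hy => ?_
  rcases hG.eq_succ_or_eq_succ hy with rfl | rfl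
  · push_cast
    linarith
  · push_cast
    linarith [(abs_le.mp (hf.abs_sub_le_one hy)).2]

lemma lap_le_lap_natCast (hG : G.IsBirthDeath) {f : ℕ → ℝ} (hf : G.Lip1 f) {r : ℕ}
    (h : f (r + 1) - f r = 1) : G.lap f (r + 1) ≤ G.lap (↑) (r + 1) := by
  refine lap_le_lap fun y hy => ?_
  rcases hG.eq_succ_or_eq_succ hy with rfl | hy'
  · push_cast
    linarith [(abs_le.mp (hf.abs_sub_le_one hy)).1]
  · obtain rfl : y = r := by omega
    push_cast
    linarith

theorem curv_succ (hG : G.IsBirthDeath) (hpos : ∀ r, 0 < G.w r (r + 1)) (r : ℕ) :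
    G.curv r (r + 1) = G.lap (↑) r - G.lap (↑) (r + 1) := by
  have hd : (G.dist r (r + 1) : ℝ) = 1 := by
    rw [G.dist_eq_one_of_w_ne_zero (hpos r).ne', Nat.cast_one]
  have lap_tent (x : ℕ) (hx : x ≤ r + 1) : G.lap (↑) x = G.lap (tent (r + 2)) x :=
    lap_congr fun y hy => by
      have := hG.le_succ_of_w_ne_zero hy
      rw [tent_of_le (by omega), tent_of_le (by omega)]
  simp only [curv, hd, div_one]
  refine IsLeast.csInf_eq ⟨⟨tent (r + 2), fun a b => ?_, finite_support_tent _, ?_, ?_⟩, ?_⟩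
  · exact (abs_tent_sub_tent_le _ _ _).trans (hG.abs_sub_le_dist hpos a b)
  · rw [tent_of_le (by omega), tent_of_le (by omega)]
    push_cast
    ring
  · rw [lap_tent r (by omega), lap_tent (r + 1) le_rfl]
  · rintro c ⟨f, hf, -, h, rfl⟩
    linarith [hG.lap_natCast_le_lap hf h, hG.lap_le_lap_natCast hf h]

end IsBirthDeath

def birthDeath (m u : ℕ → ℝ) (hm : ∀ r, 0 < m r) (hu : ∀ r, 0 ≤ u r) : WeightedGraph ℕ where
  w a b := if b = a + 1 then u a else if a = b + 1 then u b else 0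
  m := m
  symm a b := by split_ifs <;> first | rfl | omega
  loopless a := by simp
  nonneg a b := by split_ifs <;> simp [hu]
  mpos := hm
  locFin a := (Set.toFinite {a - 1, a + 1}).subset fun b hb => by
    simp only [ne_eq, Set.mem_ofPred_eq] at hb
    split_ifs at hb <;> simp_all

section birthDeath

variable {m u : ℕ → ℝ} {hm : ∀ r, 0 < m r} {hu : ∀ r, 0 ≤ u r}

lemma isBirthDeath_birthDeath : (birthDeath m u hm hu).IsBirthDeath := fun r s h₁ h₂ => by
  simp [birthDeath, h₁, h₂]

@[simp]
lemma birthDeath_m (r : ℕ) : (birthDeath m u hm hu).m r = m r := rfl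

@[simp]
lemma birthDeath_w_succ (r : ℕ) : (birthDeath m u hm hu).w r (r + 1) = u r := by
  simp [birthDeath]

@[simp]
lemma birthDeath_w_succ_left (r : ℕ) : (birthDeath m u hm hu).w (r + 1) r = u r := by
  simp [birthDeath, show r ≠ r + 1 + 1 by omega]

end birthDeath

end WeightedGraph

/-- `tail k r = ∑_{i > r} k i`. -/
noncomputable def tail (k : ℕ → ℝ) (r : ℕ) : ℝ := ∑' i, k (i + (r + 1))

lemma tail_eq_add {k : ℕ → ℝ} (hsum : Summable k) (r : ℕ) :
    tail k r = k (r + 1) + tail k (r + 1) := by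
  rw [tail, ((summable_nat_add_iff (r + 1)).2 hsum).tsum_eq_zero_add, zero_add, tail]
  exact congrArg _ (tsum_congr fun i => by ring_nf)

lemma tail_pos {k : ℕ → ℝ} (hk : ∀ r, 1 ≤ r → 0 < k r) (hsum : Summable k) (r : ℕ) :
    0 < tail k r :=
  ((summable_nat_add_iff (r + 1)).2 hsum).tsum_pos (fun _ => (hk _ (by omega)).le) 0
    (hk _ (by omega))

lemma tail_antitone {k : ℕ → ℝ} (hk : ∀ r, 1 ≤ r → 0 < k r) (hsum : Summable k) :
    Antitone (tail k) :=
  antitone_nat_of_succ_le fun r => by linarith [tail_eq_add hsum r, hk (r + 1) (by omega)]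

/-- `m (r + 1) = w(r, r + 1) / k (r + 2)` with `w(r, r + 1) = 2 m r · tail k r`. -/
noncomputable def chainMass (k : ℕ → ℝ) : ℕ → ℝ
  | 0 => 1
  | r + 1 => 2 * chainMass k r * tail k r / k (r + 2)

lemma chainMass_pos {k : ℕ → ℝ} (hk : ∀ r, 1 ≤ r → 0 < k r) (hsum : Summable k) :
    ∀ r, 0 < chainMass k r
  | 0 => one_pos
  | r + 1 => div_pos (mul_pos (mul_pos two_pos (chainMass_pos hk hsum r)) (tail_pos hk hsum r))
      (hk _ (by omega))

lemma chainMass_succ_mul {k : ℕ → ℝ} (hk : ∀ r, 1 ≤ r → 0 < k r) (r : ℕ) :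
    chainMass k (r + 1) * k (r + 2) = 2 * chainMass k r * tail k r :=
  div_mul_cancel₀ _ (hk _ (by omega)).ne'

noncomputable def chain (k : ℕ → ℝ) (hk : ∀ r, 1 ≤ r → 0 < k r) (hsum : Summable k) :
    WeightedGraph ℕ :=
  .birthDeath (chainMass k) (fun r => 2 * chainMass k r * tail k r) (chainMass_pos hk hsum)
    fun r => (mul_pos (mul_pos two_pos (chainMass_pos hk hsum r)) (tail_pos hk hsum r)).le

section chain

open WeightedGraph

variable {k : ℕ → ℝ} (hk : ∀ r, 1 ≤ r → 0 < k r) (hsum : Summable k)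

lemma isBirthDeath_chain : (chain k hk hsum).IsBirthDeath := isBirthDeath_birthDeath

lemma chain_w_succ_pos (r : ℕ) : 0 < (chain k hk hsum).w r (r + 1) := by
  simpa [chain] using mul_pos (mul_pos two_pos (chainMass_pos hk hsum r)) (tail_pos hk hsum r)

lemma chain_lap_natCast_zero : (chain k hk hsum).lap (↑) 0 = 2 * tail k 0 := by
  rw [(isBirthDeath_chain hk hsum).lap_natCast_zero]
  simp [chain, chainMass]

lemma chain_lap_natCast_succ (r : ℕ) :
    (chain k hk hsum).lap (↑) (r + 1) = 2 * tail k (r + 1) - k (r + 2) := by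
  have := (chainMass_pos hk hsum (r + 1)).ne'
  rw [(isBirthDeath_chain hk hsum).lap_natCast_succ]
  simp only [chain, birthDeath_m, birthDeath_w_succ, birthDeath_w_succ_left,
    ← chainMass_succ_mul hk r]
  field_simp

lemma chain_curv_zero : (chain k hk hsum).curv 0 1 = 2 * k 1 + k 2 := by
  rw [(isBirthDeath_chain hk hsum).curv_succ (chain_w_succ_pos hk hsum), chain_lap_natCast_zero,
    chain_lap_natCast_succ, tail_eq_add hsum 0]
  ring

lemma chain_curv_succ (r : ℕ) :
    (chain k hk hsum).curv (r + 1) (r + 2) = k (r + 2) + k (r + 3) := by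
  rw [(isBirthDeath_chain hk hsum).curv_succ (chain_w_succ_pos hk hsum), chain_lap_natCast_succ,
    chain_lap_natCast_succ, tail_eq_add hsum (r + 1)]
  ring

lemma chain_deg_le (x : ℕ) : (chain k hk hsum).deg x ≤ 3 * tail k 0 := by
  rcases x with _ | r
  · rw [(isBirthDeath_chain hk hsum).deg_zero]
    simp only [chain, birthDeath_m, birthDeath_w_succ, chainMass, div_one]
    linarith [tail_pos hk hsum 0]
  · have hdeg : (chain k hk hsum).deg (r + 1) = k (r + 2) + 2 * tail k (r + 1) := by
      have := (chainMass_pos hk hsum (r + 1)).ne'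
      rw [(isBirthDeath_chain hk hsum).deg_succ]
      simp only [chain, birthDeath_m, birthDeath_w_succ, birthDeath_w_succ_left,
        ← chainMass_succ_mul hk r]
      field_simp
    rw [hdeg]
    linarith [tail_eq_add hsum (r + 1), tail_pos hk hsum (r + 2),
      tail_antitone hk hsum (Nat.zero_le (r + 1))]

end chain

/-- For every positive summable sequence `(k_r)_{r ≥ 1}` there is an infinite birth-death chain
with bounded weighted vertex degree whose sphere curvatures `κ(r) = κ(r-1,r)` satisfy
`κ(r) ≥ k_r` for all `r ≥ 1` and `∑_r κ(r) < ∞`. -/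
theorem stmt18 (k : ℕ → ℝ) (hk : ∀ r : ℕ, 1 ≤ r → 0 < k r) (hsum : Summable k) :
    ∃ G : WeightedGraph ℕ,
      (∀ r s : ℕ, s ≠ r + 1 → r ≠ s + 1 → G.w r s = 0) ∧
      (∀ r : ℕ, 0 < G.w r (r + 1)) ∧
      (∃ M : ℝ, ∀ x, G.deg x ≤ M) ∧
      (∀ r : ℕ, 1 ≤ r → k r ≤ G.curv (r - 1) r) ∧
      Summable (fun r : ℕ => G.curv r (r + 1)) := by
  refine ⟨chain k hk hsum, isBirthDeath_chain hk hsum, chain_w_succ_pos hk hsum,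
    ⟨3 * tail k 0, chain_deg_le hk hsum⟩, fun r hr => ?_, ?_⟩
  · obtain _ | _ | r := r
    · omega
    · show k 1 ≤ (chain k hk hsum).curv 0 1
      linarith [chain_curv_zero hk hsum, hk 1 le_rfl, hk 2 (by omega)]
    · show k (r + 2) ≤ (chain k hk hsum).curv (r + 1) (r + 2)
      linarith [chain_curv_succ hk hsum r, hk (r + 3) (by omega)]
  · refine (summable_nat_add_iff 1).mp ?_
    simp only [chain_curv_succ hk hsum]
    exact ((summable_nat_add_iff 2).mpr hsum).add ((summable_nat_add_iff 3).mpr hsum)
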